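/- arXiv:2510.02536 — 2 statements merged into one kernel-verified Lean document; each statement's English description precedes it below -/
import Mathlib

section
/- Invariant region for the scheme: assume V_min(ρ) = V_max(ρ) for ρ ∈ [0,ε] (no-vacuum phase assumption) and the CFL condition λ·max{2,1/ε}·L ≤ 1. If ε ≤ u_j^n ≤ 1 and 0 ≤ w_j^n ≤ 1 for all j ∈ ℤ, then ε ≤ u_j^{n+1} ≤ 1 and 0 ≤ w_j^{n+1} ≤ 1 for all j ∈ ℤ, where u_j^{n+1} = H_j^n(u_{j-1}^n, u_j^n, u_{j+1}^n) and w_j^{n+1} = (1 − λ s_{j-1/2}^n) w_j^n + λ s_{j-1/2}^n w_{j-1}^n with s_{j-1/2}^n = F_{j-1/2}^n(u_{j-1}^n, u_j^n)/u_j^{n+1}. -/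
/-!
`H(a, b, c) = b - λ (F(b, c) - F(a, b))` is nondecreasing in each argument: `F` is nondecreasing
in its left and nonincreasing in its right argument, since each `f(·, w)` increases up to its
critical point `α(w)` and decreases after it, and the CFL condition `2 λ L ≤ 1` absorbs the
`L`-Lipschitz dependence on the middle argument. The constant states `ε` and `1` are fixed points
of `H`: at `1` because `f(1, w) = 0`, at `ε` because all the `f(·, w)` coincide on `[0, ε]`, so
two neighbouring critical points cannot lie on opposite sides of `ε`. Hence `ε ≤ H ≤ 1`. The
`w`-update is then a convex combination, as `0 ≤ λ s ≤ λ L / ε ≤ 1`.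
-/

open Set

/-- The GARZ flux `f(ρ, w)`. -/
noncomputable def flux (Vmin Vmax : ℝ → ℝ) (ρ w : ℝ) : ℝ :=
  ρ * ((1 - w) * Vmin ρ + w * Vmax ρ)

/-- The numerical interface flux `F_{j+1/2}ⁿ(u_l,u_r)`. -/
noncomputable def interfaceFlux (Vmin Vmax α : ℝ → ℝ) (wl wr ul ur : ℝ) : ℝ :=
  min (flux Vmin Vmax (min ul (α wl)) wl) (flux Vmin Vmax (max (α wr) ur) wr)

theorem min_sub_min_le_sub {x y : ℝ} (hxy : x ≤ y) (c : ℝ) : min y c - min x c ≤ y - x := by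
  simp only [min_def]
  split_ifs <;> linarith

theorem max_sub_max_le_sub {x y : ℝ} (hxy : x ≤ y) (c : ℝ) : max c y - max c x ≤ y - x := by
  simp only [max_def]
  split_ifs <;> linarith

theorem strictAntiOn_deriv_of_deriv_deriv_neg {f : ℝ → ℝ} {D : Set ℝ} (hD : Convex ℝ D)
    (h : ∀ x ∈ D, deriv (deriv f) x < 0) : StrictAntiOn (deriv f) D :=
  strictAntiOn_of_deriv_neg hD
    (fun x hx => (differentiableAt_of_deriv_ne_zero (h x hx).ne).continuousAt.continuousWithinAt)
    (fun x hx => h x (interior_subset hx))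

/-- `g = f(·, w)` on `[0, 1]`, with critical point `a = α(w)` and Lipschitz constant `L`. -/
structure IsConcaveProfile (g : ℝ → ℝ) (a L : ℝ) : Prop where
  continuousOn : ContinuousOn g (Icc 0 1)
  deriv_deriv_neg : ∀ ρ ∈ Icc (0:ℝ) 1, deriv (deriv g) ρ < 0
  crit_mem : a ∈ Icc (0:ℝ) 1
  deriv_crit : deriv g a = 0
  abs_deriv_le : ∀ ρ ∈ Icc (0:ℝ) 1, |deriv g ρ| ≤ L

namespace IsConcaveProfile

variable {g : ℝ → ℝ} {a L : ℝ}

theorem bound_nonneg (hg : IsConcaveProfile g a L) : 0 ≤ L :=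
  (abs_nonneg _).trans (hg.abs_deriv_le a hg.crit_mem)

theorem deriv_pos (hg : IsConcaveProfile g a L) {ρ : ℝ} (hρ : ρ ∈ Icc (0:ℝ) 1)
    (h : ρ < a) : 0 < deriv g ρ :=
  hg.deriv_crit ▸ strictAntiOn_deriv_of_deriv_deriv_neg (convex_Icc 0 1) hg.deriv_deriv_neg
    hρ hg.crit_mem h

theorem deriv_neg (hg : IsConcaveProfile g a L) {ρ : ℝ} (hρ : ρ ∈ Icc (0:ℝ) 1)
    (h : a < ρ) : deriv g ρ < 0 :=
  hg.deriv_crit ▸ strictAntiOn_deriv_of_deriv_deriv_neg (convex_Icc 0 1) hg.deriv_deriv_neg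
    hg.crit_mem hρ h

theorem differentiableOn_Ioo_crit (hg : IsConcaveProfile g a L) :
    DifferentiableOn ℝ g (Ioo 0 a) := fun _ hρ =>
  (differentiableAt_of_deriv_ne_zero
    (hg.deriv_pos ⟨hρ.1.le, hρ.2.le.trans hg.crit_mem.2⟩ hρ.2).ne').differentiableWithinAt

theorem differentiableOn_crit_Ioo (hg : IsConcaveProfile g a L) :
    DifferentiableOn ℝ g (Ioo a 1) := fun _ hρ =>
  (differentiableAt_of_deriv_ne_zero
    (hg.deriv_neg ⟨hg.crit_mem.1.trans hρ.1.le, hρ.2.le⟩ hρ.1).ne).differentiableWithinAt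

theorem monotoneOn (hg : IsConcaveProfile g a L) : MonotoneOn g (Icc 0 a) :=
  (strictMonoOn_of_deriv_pos (convex_Icc 0 a)
    (hg.continuousOn.mono (Icc_subset_Icc_right hg.crit_mem.2))
    (fun ρ hρ => by
      rw [interior_Icc] at hρ
      exact hg.deriv_pos ⟨hρ.1.le, hρ.2.le.trans hg.crit_mem.2⟩ hρ.2)).monotoneOn

theorem antitoneOn (hg : IsConcaveProfile g a L) : AntitoneOn g (Icc a 1) :=
  (strictAntiOn_of_deriv_neg (convex_Icc a 1)
    (hg.continuousOn.mono (Icc_subset_Icc_left hg.crit_mem.1))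
    (fun ρ hρ => by
      rw [interior_Icc] at hρ
      exact hg.deriv_neg ⟨hg.crit_mem.1.trans hρ.1.le, hρ.2.le⟩ hρ.1)).antitoneOn

theorem sub_le_of_le_crit (hg : IsConcaveProfile g a L) {x y : ℝ} (hx : 0 ≤ x) (hxy : x ≤ y)
    (hy : y ≤ a) : g y - g x ≤ L * (y - x) := by
  refine (convex_Icc 0 a).image_sub_le_mul_sub_of_deriv_le
    (hg.continuousOn.mono (Icc_subset_Icc_right hg.crit_mem.2))
    (by simpa only [interior_Icc] using hg.differentiableOn_Ioo_crit) (fun ρ hρ => ?_)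
    x ⟨hx, hxy.trans hy⟩ y ⟨hx.trans hxy, hy⟩ hxy
  rw [interior_Icc] at hρ
  exact le_of_abs_le (hg.abs_deriv_le ρ ⟨hρ.1.le, hρ.2.le.trans hg.crit_mem.2⟩)

theorem sub_le_of_crit_le (hg : IsConcaveProfile g a L) {x y : ℝ} (hx : a ≤ x) (hxy : x ≤ y)
    (hy : y ≤ 1) : g x - g y ≤ L * (y - x) := by
  have := (convex_Icc a 1).mul_sub_le_image_sub_of_le_deriv
    (hg.continuousOn.mono (Icc_subset_Icc_left hg.crit_mem.1))
    (by simpa only [interior_Icc] using hg.differentiableOn_crit_Ioo) (C := -L) (fun ρ hρ => ?_)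
    x ⟨hx, hxy.trans hy⟩ y ⟨hx.trans hxy, hy⟩ hxy
  · linarith
  rw [interior_Icc] at hρ
  exact neg_le_of_abs_le (hg.abs_deriv_le ρ ⟨hg.crit_mem.1.trans hρ.1.le, hρ.2.le⟩)

theorem le_apply_min_crit (hg : IsConcaveProfile g a L) {x : ℝ} (hx : x ∈ Icc (0:ℝ) 1) :
    g x ≤ g (min x a) := by
  rcases le_total x a with h | h
  · rw [min_eq_left h]
  · rw [min_eq_right h]
    exact hg.antitoneOn ⟨le_rfl, hg.crit_mem.2⟩ ⟨h, hx.2⟩ h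

theorem le_apply_crit_max (hg : IsConcaveProfile g a L) {x : ℝ} (hx : x ∈ Icc (0:ℝ) 1) :
    g x ≤ g (max a x) := by
  rcases le_total a x with h | h
  · rw [max_eq_right h]
  · rw [max_eq_left h]
    exact hg.monotoneOn ⟨hx.1, h⟩ ⟨hg.crit_mem.1, le_rfl⟩ h

theorem apply_min_crit_le (hg : IsConcaveProfile g a L) {x y : ℝ} (hx : 0 ≤ x) (hxy : x ≤ y) :
    g (min x a) ≤ g (min y a) ∧ g (min y a) - g (min x a) ≤ L * (y - x) := by
  have hmin : min x a ≤ min y a := min_le_min_right a hxy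
  refine ⟨hg.monotoneOn ⟨le_min hx hg.crit_mem.1, min_le_right _ _⟩
    ⟨le_min (hx.trans hxy) hg.crit_mem.1, min_le_right _ _⟩ hmin, ?_⟩
  calc g (min y a) - g (min x a) ≤ L * (min y a - min x a) :=
        hg.sub_le_of_le_crit (le_min hx hg.crit_mem.1) hmin (min_le_right _ _)
    _ ≤ L * (y - x) := mul_le_mul_of_nonneg_left (min_sub_min_le_sub hxy a) hg.bound_nonneg

theorem apply_crit_max_le (hg : IsConcaveProfile g a L) {x y : ℝ} (hxy : x ≤ y) (hy : y ≤ 1) :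
    g (max a y) ≤ g (max a x) ∧ g (max a x) - g (max a y) ≤ L * (y - x) := by
  have hmax : max a x ≤ max a y := max_le_max_left a hxy
  refine ⟨hg.antitoneOn ⟨le_max_left _ _, max_le hg.crit_mem.2 (hxy.trans hy)⟩
    ⟨le_max_left _ _, max_le hg.crit_mem.2 hy⟩ hmax, ?_⟩
  calc g (max a x) - g (max a y) ≤ L * (max a y - max a x) :=
        hg.sub_le_of_crit_le (le_max_left _ _) hmax (max_le hg.crit_mem.2 hy)
    _ ≤ L * (y - x) := mul_le_mul_of_nonneg_left (max_sub_max_le_sub hxy a) hg.bound_nonneg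

theorem crit_lt_of_eqOn {g' : ℝ → ℝ} {a' L' ε : ℝ} (hg : IsConcaveProfile g a L)
    (hg' : IsConcaveProfile g' a' L') (hε : ε ≤ 1) (heq : EqOn g g' (Icc 0 ε)) (ha : a < ε) :
    a' < ε := by
  by_contra! ha'
  set ρ := (a + ε) / 2 with hρ_def
  have hρa : a < ρ := by linarith
  have hρε : ρ < ε := by linarith
  have hρ0 : 0 < ρ := hg.crit_mem.1.trans_lt hρa
  have hρ : ρ ∈ Icc (0:ℝ) 1 := ⟨hρ0.le, by linarith⟩
  have hderiv : deriv g ρ = deriv g' ρ :=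
    Filter.EventuallyEq.deriv_eq (Filter.mem_of_superset (Ioo_mem_nhds hρ0 hρε)
      (fun x hx => heq (Ioo_subset_Icc_self hx)))
  linarith [hg.deriv_neg hρ hρa, hg'.deriv_pos hρ (hρε.trans_le ha')]

end IsConcaveProfile

section Flux

variable {Vmin Vmax α : ℝ → ℝ}

theorem continuousOn_flux {s : Set ℝ} (hmin : ContinuousOn Vmin s) (hmax : ContinuousOn Vmax s)
    (ω : ℝ) : ContinuousOn (flux Vmin Vmax · ω) s := by
  unfold flux
  fun_prop

theorem flux_nonneg {ρ ω : ℝ} (hρ : 0 ≤ ρ) (hmin : 0 ≤ Vmin ρ) (hmax : 0 ≤ Vmax ρ)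
    (hω : ω ∈ Icc (0:ℝ) 1) : 0 ≤ flux Vmin Vmax ρ ω :=
  mul_nonneg hρ (add_nonneg (mul_nonneg (sub_nonneg.2 hω.2) hmin) (mul_nonneg hω.1 hmax))

theorem flux_eq_of_eq {ρ : ℝ} (h : Vmin ρ = Vmax ρ) (ω ω' : ℝ) :
    flux Vmin Vmax ρ ω = flux Vmin Vmax ρ ω' := by
  simp only [flux, h]
  ring

variable {L wl wr : ℝ}

theorem interfaceFlux_mono_left (hl : IsConcaveProfile (flux Vmin Vmax · wl) (α wl) L)
    {ul ul' ur : ℝ} (hul : 0 ≤ ul) (h : ul ≤ ul') :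
    interfaceFlux Vmin Vmax α wl wr ul ur ≤ interfaceFlux Vmin Vmax α wl wr ul' ur ∧
      interfaceFlux Vmin Vmax α wl wr ul' ur - interfaceFlux Vmin Vmax α wl wr ul ur ≤
        L * (ul' - ul) := by
  obtain ⟨hmono, hlip⟩ := hl.apply_min_crit_le hul h
  exact ⟨min_le_min_right _ hmono, (min_sub_min_le_sub hmono _).trans hlip⟩

theorem interfaceFlux_anti_right (hr : IsConcaveProfile (flux Vmin Vmax · wr) (α wr) L)
    {ul ur ur' : ℝ} (hur' : ur' ≤ 1) (h : ur ≤ ur') :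
    interfaceFlux Vmin Vmax α wl wr ul ur' ≤ interfaceFlux Vmin Vmax α wl wr ul ur ∧
      interfaceFlux Vmin Vmax α wl wr ul ur - interfaceFlux Vmin Vmax α wl wr ul ur' ≤
        L * (ur' - ur) := by
  obtain ⟨hanti, hlip⟩ := hr.apply_crit_max_le h hur'
  refine ⟨min_le_min_left _ hanti, ?_⟩
  unfold interfaceFlux
  rw [min_comm _ (flux Vmin Vmax (max (α wr) ur) wr),
    min_comm _ (flux Vmin Vmax (max (α wr) ur') wr)]
  exact (min_sub_min_le_sub hanti _).trans hlip

theorem interfaceFlux_self (hl : IsConcaveProfile (flux Vmin Vmax · wl) (α wl) L)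
    (hr : IsConcaveProfile (flux Vmin Vmax · wr) (α wr) L) {k : ℝ} (hk : k ∈ Icc (0:ℝ) 1)
    (heq : flux Vmin Vmax k wl = flux Vmin Vmax k wr) (hcrit : k ≤ α wl ∨ α wr ≤ k) :
    interfaceFlux Vmin Vmax α wl wr k k = flux Vmin Vmax k wl := by
  have hdemand := hl.le_apply_min_crit hk
  have hsupply := hr.le_apply_crit_max hk
  unfold interfaceFlux
  rcases hcrit with h | h
  · rw [min_eq_left h]
    exact min_eq_left (heq ▸ hsupply)
  · rw [max_eq_right h, ← heq]
    exact min_eq_right hdemand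

theorem interfaceFlux_nonneg (hmin : ∀ ρ ∈ Icc (0:ℝ) 1, 0 ≤ Vmin ρ)
    (hmax : ∀ ρ ∈ Icc (0:ℝ) 1, 0 ≤ Vmax ρ) (hwl : wl ∈ Icc (0:ℝ) 1)
    (hwr : wr ∈ Icc (0:ℝ) 1) (hαl : α wl ∈ Icc (0:ℝ) 1) (hαr : α wr ∈ Icc (0:ℝ) 1)
    {ul ur : ℝ} (hul : 0 ≤ ul) (hur : ur ≤ 1) :
    0 ≤ interfaceFlux Vmin Vmax α wl wr ul ur := by
  have hdemand : min ul (α wl) ∈ Icc (0:ℝ) 1 :=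
    ⟨le_min hul hαl.1, (min_le_right _ _).trans hαl.2⟩
  have hsupply : max (α wr) ur ∈ Icc (0:ℝ) 1 :=
    ⟨hαr.1.trans (le_max_left _ _), max_le hαr.2 hur⟩
  exact le_min (flux_nonneg hdemand.1 (hmin _ hdemand) (hmax _ hdemand) hwl)
    (flux_nonneg hsupply.1 (hmin _ hsupply) (hmax _ hsupply) hwr)

theorem interfaceFlux_le (hl : IsConcaveProfile (flux Vmin Vmax · wl) (α wl) L) {ul ur : ℝ}
    (hul : 0 ≤ ul) : interfaceFlux Vmin Vmax α wl wr ul ur ≤ L := by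
  have hlip := hl.sub_le_of_le_crit le_rfl (le_min hul hl.crit_mem.1) (min_le_right _ _)
  have hflux0 : flux Vmin Vmax 0 wl = 0 := zero_mul _
  calc interfaceFlux Vmin Vmax α wl wr ul ur ≤ flux Vmin Vmax (min ul (α wl)) wl :=
        min_le_left _ _
    _ ≤ L * min ul (α wl) := by linarith
    _ ≤ L * 1 :=
        mul_le_mul_of_nonneg_left ((min_le_right _ _).trans hl.crit_mem.2) hl.bound_nonneg
    _ = L := mul_one L

end Flux

/-- The update `u_j^{n+1} = H_j^n(u_{j-1}^n, u_j^n, u_{j+1}^n)`,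
with `wl, w, wr = w_{j-1}^n, w_j^n, w_{j+1}^n`. -/
noncomputable def densityUpdate (Vmin Vmax α : ℝ → ℝ) (lam wl w wr ul u ur : ℝ) : ℝ :=
  u - lam * (interfaceFlux Vmin Vmax α w wr u ur - interfaceFlux Vmin Vmax α wl w ul u)

section DensityUpdate

variable {Vmin Vmax α : ℝ → ℝ} {L lam wl w wr : ℝ}

theorem densityUpdate_mono (hl : IsConcaveProfile (flux Vmin Vmax · wl) (α wl) L)
    (hw : IsConcaveProfile (flux Vmin Vmax · w) (α w) L)
    (hr : IsConcaveProfile (flux Vmin Vmax · wr) (α wr) L) (hlam : 0 ≤ lam)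
    (hCFL : 2 * (lam * L) ≤ 1) {ul ul' u u' ur ur' : ℝ} (hul : 0 ≤ ul) (hu : 0 ≤ u)
    (hu' : u' ≤ 1) (hur' : ur' ≤ 1) (hul_le : ul ≤ ul') (hu_le : u ≤ u')
    (hur_le : ur ≤ ur') :
    densityUpdate Vmin Vmax α lam wl w wr ul u ur ≤
      densityUpdate Vmin Vmax α lam wl w wr ul' u' ur' := by
  obtain ⟨hleft, -⟩ := interfaceFlux_mono_left (wr := w) (ur := u) hl hul hul_le
  obtain ⟨hright, -⟩ := interfaceFlux_anti_right (ul := u) hr hur' hur_le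
  obtain ⟨-, hcenter_out⟩ := interfaceFlux_mono_left (wr := wr) (ur := ur') hw hu hu_le
  obtain ⟨-, hcenter_in⟩ := interfaceFlux_anti_right (wl := wl) (ul := ul') hw hu' hu_le
  have hincr : interfaceFlux Vmin Vmax α w wr u' ur' - interfaceFlux Vmin Vmax α wl w ul' u' -
      (interfaceFlux Vmin Vmax α w wr u ur - interfaceFlux Vmin Vmax α wl w ul u) ≤
        2 * L * (u' - u) := by
    linarith
  have hcfl : lam * (2 * L * (u' - u)) ≤ u' - u := by
    nlinarith [sub_nonneg.2 hu_le]
  unfold densityUpdate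
  nlinarith [mul_le_mul_of_nonneg_left hincr hlam]

theorem densityUpdate_self (hl : IsConcaveProfile (flux Vmin Vmax · wl) (α wl) L)
    (hw : IsConcaveProfile (flux Vmin Vmax · w) (α w) L)
    (hr : IsConcaveProfile (flux Vmin Vmax · wr) (α wr) L) {k : ℝ} (hk : k ∈ Icc (0:ℝ) 1)
    (hV : Vmin k = Vmax k) (hcrit_l : k ≤ α wl ∨ α w ≤ k)
    (hcrit_r : k ≤ α w ∨ α wr ≤ k) :
    densityUpdate Vmin Vmax α lam wl w wr k k k = k := by
  rw [densityUpdate, interfaceFlux_self hl hw hk (flux_eq_of_eq hV _ _) hcrit_l,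
    interfaceFlux_self hw hr hk (flux_eq_of_eq hV _ _) hcrit_r, flux_eq_of_eq hV w wl]
  ring

theorem densityUpdate_mem_Icc {ε : ℝ} (hε : ε ∈ Icc (0:ℝ) 1)
    (hvac : ∀ ρ ∈ Icc (0:ℝ) ε, Vmin ρ = Vmax ρ) (hV1 : Vmin 1 = Vmax 1)
    (hl : IsConcaveProfile (flux Vmin Vmax · wl) (α wl) L)
    (hw : IsConcaveProfile (flux Vmin Vmax · w) (α w) L)
    (hr : IsConcaveProfile (flux Vmin Vmax · wr) (α wr) L) (hlam : 0 ≤ lam)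
    (hCFL : 2 * (lam * L) ≤ 1) {ul u ur : ℝ} (hul : ul ∈ Icc ε 1) (hu : u ∈ Icc ε 1)
    (hur : ur ∈ Icc ε 1) : densityUpdate Vmin Vmax α lam wl w wr ul u ur ∈ Icc ε 1 := by
  have hεflux : ∀ ω ω', EqOn (flux Vmin Vmax · ω) (flux Vmin Vmax · ω') (Icc 0 ε) :=
    fun ω ω' ρ hρ => flux_eq_of_eq (hvac ρ hρ) ω ω'
  have hcrit_l : ε ≤ α wl ∨ α w ≤ ε := (le_or_gt ε (α wl)).imp_right
    fun h => (hl.crit_lt_of_eqOn hw hε.2 (hεflux wl w) h).le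
  have hcrit_r : ε ≤ α w ∨ α wr ≤ ε := (le_or_gt ε (α w)).imp_right
    fun h => (hw.crit_lt_of_eqOn hr hε.2 (hεflux w wr) h).le
  have h0 : 0 ≤ ε := hε.1
  constructor
  · calc ε = densityUpdate Vmin Vmax α lam wl w wr ε ε ε :=
          (densityUpdate_self hl hw hr hε (hvac ε ⟨h0, le_rfl⟩) hcrit_l hcrit_r).symm
      _ ≤ _ := densityUpdate_mono hl hw hr hlam hCFL h0 h0 hu.2 hur.2 hul.1 hu.1 hur.1
  · calc densityUpdate Vmin Vmax α lam wl w wr ul u ur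
        ≤ densityUpdate Vmin Vmax α lam wl w wr 1 1 1 :=
          densityUpdate_mono hl hw hr hlam hCFL (h0.trans hul.1) (h0.trans hu.1) le_rfl le_rfl
            hul.2 hu.2 hur.2
      _ = 1 := densityUpdate_self hl hw hr ⟨zero_le_one, le_rfl⟩ hV1 (Or.inr hw.crit_mem.2)
          (Or.inr hr.crit_mem.2)

end DensityUpdate

theorem scheme_invariant_region_general
    (Vmin Vmax : ℝ → ℝ)
    (hVminLip : ∃ K, LipschitzOnWith K Vmin (Icc 0 1))
    (hVmaxLip : ∃ K, LipschitzOnWith K Vmax (Icc 0 1))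
    (hVminPos : ∀ ρ ∈ Icc (0:ℝ) 1, 0 ≤ Vmin ρ)
    (hVmaxPos : ∀ ρ ∈ Icc (0:ℝ) 1, 0 ≤ Vmax ρ)
    (hVmin1 : Vmin 1 = 0) (hVmax1 : Vmax 1 = 0)
    (hconc : ∀ ρ ∈ Icc (0:ℝ) 1, ∀ ω ∈ Icc (0:ℝ) 1,
      deriv (deriv (fun p => flux Vmin Vmax p ω)) ρ < 0)
    (α : ℝ → ℝ)
    (hαmem : ∀ ω ∈ Icc (0:ℝ) 1, α ω ∈ Icc (0:ℝ) 1)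
    (hαcrit : ∀ ω ∈ Icc (0:ℝ) 1, deriv (fun p => flux Vmin Vmax p ω) (α ω) = 0)
    (eps lam L : ℝ) (heps : eps ∈ Ioo (0:ℝ) 1) (hlam : 0 < lam)
    -- no-vacuum phase assumption: the two velocities coincide at low densities
    (hvac : ∀ ρ ∈ Icc (0:ℝ) eps, Vmin ρ = Vmax ρ)
    (hLbound : ∀ ρ ∈ Icc (0:ℝ) 1, ∀ ω ∈ Icc (0:ℝ) 1,
      |deriv (fun p => flux Vmin Vmax p ω) ρ| ≤ L)
    -- CFL condition
    (hCFL : lam * max 2 (1 / eps) * L ≤ 1)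
    (u w unew wnew : ℤ → ℝ) (s : ℤ → ℝ)
    (hu : ∀ j, u j ∈ Icc eps 1) (hw : ∀ j, w j ∈ Icc (0:ℝ) 1)
    (hunew : ∀ j, unew j = u j -
      lam * (interfaceFlux Vmin Vmax α (w j) (w (j+1)) (u j) (u (j+1)) -
             interfaceFlux Vmin Vmax α (w (j-1)) (w j) (u (j-1)) (u j)))
    (hs : ∀ j, s j = interfaceFlux Vmin Vmax α (w (j-1)) (w j) (u (j-1)) (u j) / unew j)
    (hwnew : ∀ j, wnew j = (1 - lam * s j) * w j + lam * s j * w (j-1)) :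
    ∀ j, unew j ∈ Icc eps 1 ∧ wnew j ∈ Icc (0:ℝ) 1 := by
  obtain ⟨heps0, heps1⟩ := heps
  obtain ⟨_, hVminLip⟩ := hVminLip
  obtain ⟨_, hVmaxLip⟩ := hVmaxLip
  have hprof : ∀ j, IsConcaveProfile (flux Vmin Vmax · (w j)) (α (w j)) L := fun j =>
    ⟨continuousOn_flux hVminLip.continuousOn hVmaxLip.continuousOn _,
      fun ρ hρ => hconc ρ hρ _ (hw j), hαmem _ (hw j), hαcrit _ (hw j),
      fun ρ hρ => hLbound ρ hρ _ (hw j)⟩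
  have hL : 0 ≤ L := (hprof 0).bound_nonneg
  have hCFL₂ : 2 * (lam * L) ≤ 1 := by
    calc 2 * (lam * L) = lam * 2 * L := by ring
      _ ≤ lam * max 2 (1 / eps) * L := by gcongr; exact le_max_left _ _
      _ ≤ 1 := hCFL
  have hCFLε : lam * L ≤ eps := by
    have hCFL' : lam * (1 / eps) * L ≤ 1 := le_trans (by gcongr; exact le_max_right _ _) hCFL
    calc lam * L = eps * (lam * (1 / eps) * L) := by field_simp
      _ ≤ eps := mul_le_of_le_one_right heps0.le hCFL'
  have hunew_mem : ∀ j, unew j ∈ Icc eps 1 := fun j => by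
    rw [hunew j]
    exact densityUpdate_mem_Icc ⟨heps0.le, heps1.le⟩ hvac (hVmin1.trans hVmax1.symm) (hprof _)
      (hprof _) (hprof _) hlam.le hCFL₂ (hu _) (hu _) (hu _)
  intro j
  refine ⟨hunew_mem j, ?_⟩
  have hunew_pos : 0 < unew j := heps0.trans_le (hunew_mem j).1
  have hflux_nonneg := interfaceFlux_nonneg hVminPos hVmaxPos (hw (j - 1)) (hw j)
    (hαmem _ (hw (j - 1))) (hαmem _ (hw j)) (heps0.le.trans (hu (j - 1)).1) (hu j).2
  have hflux_le := interfaceFlux_le (wr := w j) (ur := u j) (hprof (j - 1))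
    (heps0.le.trans (hu (j - 1)).1)
  have hθ0 : 0 ≤ lam * s j := mul_nonneg hlam.le (hs j ▸ div_nonneg hflux_nonneg hunew_pos.le)
  have hθ1 : lam * s j ≤ 1 := by
    rw [hs j, ← mul_div_assoc, div_le_one hunew_pos]
    calc _ ≤ lam * L := mul_le_mul_of_nonneg_left hflux_le hlam.le
      _ ≤ eps := hCFLε
      _ ≤ unew j := (hunew_mem j).1
  rw [hwnew j]
  simpa only [smul_eq_mul] using
    convex_Icc (0:ℝ) 1 (hw j) (hw (j - 1)) (sub_nonneg.2 hθ1) hθ0 (sub_add_cancel 1 _)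

/-- Invariant region of the scheme: if `ε ≤ u_jⁿ ≤ 1` and `0 ≤ w_jⁿ ≤ 1`, then
the updated values satisfy `ε ≤ u_j^{n+1} ≤ 1` and `0 ≤ w_j^{n+1} ≤ 1`. -/
theorem scheme_invariant_region
    (Vmin Vmax : ℝ → ℝ)
    (hVminLip : ∃ K, LipschitzOnWith K Vmin (Icc 0 1))
    (hVmaxLip : ∃ K, LipschitzOnWith K Vmax (Icc 0 1))
    (hVminPos : ∀ ρ ∈ Icc (0:ℝ) 1, 0 ≤ Vmin ρ)
    (hVmaxPos : ∀ ρ ∈ Icc (0:ℝ) 1, 0 ≤ Vmax ρ)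
    (hVminAnti : AntitoneOn Vmin (Icc 0 1))
    (hVmaxAnti : AntitoneOn Vmax (Icc 0 1))
    (hord : ∀ ρ ∈ Icc (0:ℝ) 1, Vmin ρ ≤ Vmax ρ)
    (hVmin1 : Vmin 1 = 0) (hVmax1 : Vmax 1 = 0)
    (hconc : ∀ ρ ∈ Icc (0:ℝ) 1, ∀ ω ∈ Icc (0:ℝ) 1,
      deriv (deriv (fun p => flux Vmin Vmax p ω)) ρ < 0)
    (α : ℝ → ℝ)
    (hαLip : ∃ K, LipschitzOnWith K α (Icc 0 1))
    (hαmem : ∀ ω ∈ Icc (0:ℝ) 1, α ω ∈ Icc (0:ℝ) 1)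
    (hαcrit : ∀ ω ∈ Icc (0:ℝ) 1, deriv (fun p => flux Vmin Vmax p ω) (α ω) = 0)
    (eps lam L : ℝ) (heps : eps ∈ Ioo (0:ℝ) 1) (hlam : 0 < lam)
    -- no-vacuum phase assumption: the two velocities coincide at low densities
    (hvac : ∀ ρ ∈ Icc (0:ℝ) eps, Vmin ρ = Vmax ρ)
    (hLbound : ∀ ρ ∈ Icc (0:ℝ) 1, ∀ ω ∈ Icc (0:ℝ) 1,
      |deriv (fun p => flux Vmin Vmax p ω) ρ| ≤ L)
    -- CFL condition
    (hCFL : lam * max 2 (1 / eps) * L ≤ 1)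
    (u w unew wnew : ℤ → ℝ) (s : ℤ → ℝ)
    (hu : ∀ j, u j ∈ Icc eps 1) (hw : ∀ j, w j ∈ Icc (0:ℝ) 1)
    (hunew : ∀ j, unew j = u j -
      lam * (interfaceFlux Vmin Vmax α (w j) (w (j+1)) (u j) (u (j+1)) -
             interfaceFlux Vmin Vmax α (w (j-1)) (w j) (u (j-1)) (u j)))
    (hs : ∀ j, s j = interfaceFlux Vmin Vmax α (w (j-1)) (w j) (u (j-1)) (u j) / unew j)
    (hwnew : ∀ j, wnew j = (1 - lam * s j) * w j + lam * s j * w (j-1)) :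
    ∀ j, unew j ∈ Icc eps 1 ∧ wnew j ∈ Icc (0:ℝ) 1 :=
  scheme_invariant_region_general Vmin Vmax hVminLip hVmaxLip hVminPos hVmaxPos hVmin1 hVmax1 hconc
    α hαmem hαcrit eps lam L heps hlam hvac hLbound hCFL u w unew wnew s hu hw hunew hs hwnew
end

section
/- Flux-weighted jump bound at an interface: let f_j, f_{j+1} : [0,1] → ℝ be of the form f(·, w_j), f(·, w_{j+1}) for f(ρ,w) = ρ((1−w)V_min(ρ) + wV_max(ρ)). If ρ⁻, ρ⁺ ∈ [0,1] satisfy the Rankine-Hugoniot condition f_j(ρ⁻) = f_{j+1}(ρ⁺) and ∂ρ f_j does not change sign on the interval between ρ⁻ and ρ⁺, then |f_j(ρ⁻) − f_j(ρ⁺)| ≤ sup_{p∈[0,1]} |f_max(p) − f_min(p)| · |w_{j+1} − w_j|, where f_min(ρ) = ρV_min(ρ), f_max(ρ) = ρV_max(ρ). -/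
open Set

theorem flux_sub_flux (Vmin Vmax : ℝ → ℝ) (ρ w w' : ℝ) :
    flux Vmin Vmax ρ w' - flux Vmin Vmax ρ w = (ρ * Vmax ρ - ρ * Vmin ρ) * (w' - w) := by
  unfold flux
  ring

theorem flux_jump_bound_general
    (Vmin Vmax : ℝ → ℝ)
    (hVminLip : ∃ K, LipschitzOnWith K Vmin (Icc 0 1))
    (hVmaxLip : ∃ K, LipschitzOnWith K Vmax (Icc 0 1))
    (wj wj1 : ℝ)
    (ρm ρp : ℝ) (hρp : ρp ∈ Icc (0:ℝ) 1)
    -- Rankine–Hugoniot condition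
    (hRH : flux Vmin Vmax ρm wj = flux Vmin Vmax ρp wj1) :
    |flux Vmin Vmax ρm wj - flux Vmin Vmax ρp wj|
      ≤ (⨆ p : Icc (0:ℝ) 1, |(p:ℝ) * Vmax p - (p:ℝ) * Vmin p|) * |wj1 - wj| := by
  obtain ⟨K₁, hVmin⟩ := hVminLip
  obtain ⟨K₂, hVmax⟩ := hVmaxLip
  have hcont : ContinuousOn (fun p : ℝ => |p * Vmax p - p * Vmin p|) (Icc 0 1) :=
    ((continuousOn_id.mul hVmax.continuousOn).sub (continuousOn_id.mul hVmin.continuousOn)).abs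
  -- an unbounded family would have `⨆ = 0`
  have hbdd := (isCompact_range hcont.domRestrict).bddAbove
  rw [hRH, flux_sub_flux, abs_mul]
  exact mul_le_mul_of_nonneg_right (le_ciSup hbdd ⟨ρp, hρp⟩) (abs_nonneg _)

/-- Flux-weighted jump bound at an interface: under the Rankine–Hugoniot
condition `f_j(ρ⁻) = f_{j+1}(ρ⁺)` and sign-definiteness of `∂ρ f_j` between the
traces, `|f_j(ρ⁻) − f_j(ρ⁺)| ≤ sup_p |f_max(p) − f_min(p)| · |w_{j+1} − w_j|`. -/
theorem flux_jump_bound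
    (Vmin Vmax : ℝ → ℝ)
    (hVminLip : ∃ K, LipschitzOnWith K Vmin (Icc 0 1))
    (hVmaxLip : ∃ K, LipschitzOnWith K Vmax (Icc 0 1))
    (wj wj1 : ℝ) (hwj : wj ∈ Icc (0:ℝ) 1) (hwj1 : wj1 ∈ Icc (0:ℝ) 1)
    (ρm ρp : ℝ) (hρm : ρm ∈ Icc (0:ℝ) 1) (hρp : ρp ∈ Icc (0:ℝ) 1)
    -- Rankine–Hugoniot condition
    (hRH : flux Vmin Vmax ρm wj = flux Vmin Vmax ρp wj1)
    -- `∂ρ f_j` does not change sign between `ρ⁻` and `ρ⁺`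
    (hsign : (∀ ξ ∈ uIcc ρm ρp, 0 ≤ deriv (fun p => flux Vmin Vmax p wj) ξ) ∨
             (∀ ξ ∈ uIcc ρm ρp, deriv (fun p => flux Vmin Vmax p wj) ξ ≤ 0)) :
    |flux Vmin Vmax ρm wj - flux Vmin Vmax ρp wj|
      ≤ (⨆ p : Icc (0:ℝ) 1, |(p:ℝ) * Vmax p - (p:ℝ) * Vmin p|) * |wj1 - wj| :=
  flux_jump_bound_general Vmin Vmax hVminLip hVmaxLip wj wj1 ρm ρp hρp hRH
end
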